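/- For every n, the maximum number of pairwise vertex-disjoint cycles in the complete graph K_n on n vertices equals ⌊n/3⌋; equivalently, η(K_n) = ⌊n/3⌋. -/

import Mathlib

/-- The arc relation of the face poset of a finite abstract simplicial complex `X`
(given as a finite family of finite faces): an arc from `σ` down to `τ` whenever
`τ` is a codimension-one face of `σ`. -/
def FaceArc {V : Type*} (X : Finset (Finset V)) (σ τ : Finset V) : Prop :=
  σ ∈ X ∧ τ ∈ X ∧ τ ⊂ σ ∧ τ.card + 1 = σ.card

/-- The arc relation of the face poset of a simple graph `G`, regarded as a
1-dimensional simplicial complex: an arc from each edge-face `{u, v}` down to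
each of its endpoint vertex-faces. -/
def GraphArc {V : Type*} [DecidableEq V] (G : SimpleGraph V) (σ τ : Finset V) : Prop :=
  ∃ u v : V, G.Adj u v ∧ σ = {u, v} ∧ (τ = {u} ∨ τ = {v})

/-- A matching on the digraph with arc relation `A`: a finite set of arcs,
no two of which share an endpoint. -/
def IsMatching {α : Type*} (A : α → α → Prop) (m : Finset (α × α)) : Prop :=
  (∀ p ∈ m, A p.1 p.2) ∧
    ∀ p ∈ m, ∀ q ∈ m, p ≠ q →
      p.1 ≠ q.1 ∧ p.1 ≠ q.2 ∧ p.2 ≠ q.1 ∧ p.2 ≠ q.2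

/-- The arc relation of the digraph obtained from the digraph with arc relation `A`
by reversing the arcs belonging to `m`. -/
def MStep {α : Type*} (A : α → α → Prop) (m : Finset (α × α)) (a b : α) : Prop :=
  (A a b ∧ (a, b) ∉ m) ∨ (A b a ∧ (b, a) ∈ m)

/-- `IsCycleList R l` says the nonempty list `l` of pairwise distinct vertices is a
directed cycle of the digraph with arc relation `R` (consecutive steps, closing up). -/
def IsCycleList {α : Type*} (R : α → α → Prop) : List α → Prop
  | [] => False
  | a :: l => (a :: l).Nodup ∧ List.Chain R a (l ++ [a])

/-- The set of oriented cycles induced by the matching `m` on the digraph with arc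
relation `A` (as lists of vertices; rotated lists represent the same cycle). -/
def cyclesOf {α : Type*} (A : α → α → Prop) (m : Finset (α × α)) : Set (List α) :=
  {l | IsCycleList (MStep A m) l}

/-- `numCycles A m` is `J(m)`, the number of oriented cycles induced by `m`
(cycle lists counted up to rotation). -/
noncomputable def numCycles {α : Type*} (A : α → α → Prop) (m : Finset (α × α)) : ℕ :=
  (Quotient.mk (List.IsRotated.setoid α) '' cyclesOf A m).ncard

/-! In the face poset of a graph, an oriented cycle of `F_m` alternates between vertices and
edges: from a vertex `{u}` it can only go up along the edge matched with `{u}`, and from there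
only down to the other endpoint. Hence two oriented cycles through a common face agree up to
rotation, and each passes through at least three vertices (two would force an edge matched with
both of its endpoints), so `J(m) ≤ ⌊n/3⌋`, exactly as for vertex-disjoint cycles of `K_n`.
Conversely, `⌊n/3⌋` disjoint triangles give both `⌊n/3⌋` disjoint cycles and, matching each
triangle edge `{u, v}` with its first endpoint `{u}`, a matching with one oriented cycle
`{u} → {u, v} → {v} → ⋯` per triangle. -/

theorem List.exists_isRotated_cons_of_mem {α : Type*} {l : List α} {x : α} (hx : x ∈ l) :
    ∃ t, l ~r x :: t := by
  obtain ⟨s, t, rfl⟩ := List.append_of_mem hx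
  exact ⟨t ++ s, by simpa using List.isRotated_append (l := s) (l' := x :: t)⟩

theorem List.eq_of_isChain_cons_append_singleton {α : Type*} {R : α → α → Prop}
    (hR : ∀ ⦃c a b b'⦄, R c a → R a b → R a b' → b = b') {z : α} :
    ∀ {t₁ t₂ : List α} {c y : α}, R c y → z ∉ t₁ → z ∉ t₂ →
      IsChain R (y :: (t₁ ++ [z])) → IsChain R (y :: (t₂ ++ [z])) → t₁ = t₂
  | [], [], _, _, _, _, _, _, _ => rfl
  | [], b :: _, _, _, hy, _, hz, h₁, h₂ =>
    absurd (hR hy (isChain_pair.1 h₁) (isChain_cons_cons.1 h₂).1 ▸ mem_cons_self) hz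
  | b :: _, [], _, _, hy, hz, _, h₁, h₂ =>
    absurd (hR hy (isChain_pair.1 h₂) (isChain_cons_cons.1 h₁).1 ▸ mem_cons_self) hz
  | b :: _, b' :: _, _, _, hy, hz₁, hz₂, h₁, h₂ => by
    obtain ⟨hyb, h₁⟩ := isChain_cons_cons.1 h₁
    obtain ⟨hyb', h₂⟩ := isChain_cons_cons.1 h₂
    obtain rfl := hR hy hyb hyb'
    rw [eq_of_isChain_cons_append_singleton hR hyb (fun h => hz₁ (.tail _ h))
      (fun h => hz₂ (.tail _ h)) h₁ h₂]

theorem isCycleList_iff {α : Type*} {R : α → α → Prop} {l : List α} :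
    IsCycleList R l ↔ l ≠ [] ∧ l.Nodup ∧ Cycle.Chain R (l : Cycle α) := by
  cases l with
  | nil => simp [IsCycleList]
  | cons a t => exact ⟨fun h => ⟨List.cons_ne_nil a t, h⟩, fun h => h.2⟩

namespace IsCycleList

variable {α : Type*} {R : α → α → Prop} {l l₁ l₂ : List α} {x : α}

theorem of_isRotated (h : IsCycleList R l₁) (hr : l₁ ~r l₂) : IsCycleList R l₂ := by
  rw [isCycleList_iff] at h ⊢
  obtain ⟨hne, hnd, hch⟩ := h
  exact ⟨fun h => hne (List.isRotated_nil_iff.1 (h ▸ hr)), hr.nodup_iff.1 hnd,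
    Cycle.coe_eq_coe.2 hr ▸ hch⟩

theorem exists_mem_rel (h : IsCycleList R l) (hx : x ∈ l) : ∃ y ∈ l, R x y := by
  obtain ⟨t, hr⟩ := List.exists_isRotated_cons_of_mem hx
  obtain ⟨-, hch⟩ := h.of_isRotated hr
  cases t with
  | nil => exact ⟨x, hx, List.isChain_pair.1 hch⟩
  | cons y t => exact ⟨y, hr.mem_iff.2 (by simp), (List.isChain_cons_cons.1 hch).1⟩

theorem exists_rel (h : IsCycleList R l) (hx : x ∈ l) : ∃ w, R w x := by
  obtain ⟨t, hr⟩ := List.exists_isRotated_cons_of_mem hx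
  obtain ⟨-, hch⟩ := h.of_isRotated hr
  have hch : List.IsChain R ((x :: t) ++ [x]) := hch
  exact ⟨_, (List.isChain_append.1 hch).2.2 _
    (List.getLast?_eq_some_getLast (List.cons_ne_nil x t)) x rfl⟩

theorem isRotated_of_mem (hR : ∀ ⦃c a b b'⦄, R c a → R a b → R a b' → b = b')
    (h₁ : IsCycleList R l₁) (h₂ : IsCycleList R l₂) (hx₁ : x ∈ l₁) (hx₂ : x ∈ l₂) :
    l₁ ~r l₂ := by
  obtain ⟨t₁, r₁⟩ := List.exists_isRotated_cons_of_mem hx₁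
  obtain ⟨t₂, r₂⟩ := List.exists_isRotated_cons_of_mem hx₂
  obtain ⟨hnd₁, hc₁⟩ := h₁.of_isRotated r₁
  obtain ⟨hnd₂, hc₂⟩ := h₂.of_isRotated r₂
  obtain ⟨c, hc⟩ := h₁.exists_rel hx₁
  obtain rfl := List.eq_of_isChain_cons_append_singleton hR hc (List.nodup_cons.1 hnd₁).1
    (List.nodup_cons.1 hnd₂).1 hc₁ hc₂
  exact r₁.trans r₂.symm

end IsCycleList

open Finset in
theorem card_mul_le_card_of_pairwiseDisjoint {ι α : Type*} [Fintype α] {s : Finset ι}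
    {f : ι → Finset α} {k : ℕ} (hf : (s : Set ι).PairwiseDisjoint f) (hk : ∀ i ∈ s, k ≤ #(f i)) :
    #s * k ≤ Fintype.card α := by
  classical
  calc #s * k = #s • k := rfl
    _ ≤ ∑ i ∈ s, #(f i) := card_nsmul_le_sum s _ k hk
    _ = #(s.biUnion f) := (card_biUnion hf).symm
    _ ≤ Fintype.card α := card_le_univ _

theorem SimpleGraph.Walk.IsCycle.three_le_card_support_toFinset {V : Type*} [DecidableEq V]
    {G : SimpleGraph V} {v : V} {w : G.Walk v v} (hw : w.IsCycle) :
    3 ≤ w.support.toFinset.card := by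
  calc 3 ≤ w.length := hw.three_le_length
    _ = w.support.tail.length := by simp
    _ = w.support.tail.toFinset.card := (List.toFinset_card_of_nodup hw.support_nodup).symm
    _ ≤ w.support.toFinset.card :=
      Finset.card_le_card fun _ hx =>
        List.mem_toFinset.2 (List.mem_of_mem_tail (List.mem_toFinset.1 hx))

theorem card_mul_three_le_of_disjoint_cycles {V : Type*} [Fintype V] {G : SimpleGraph V} {k : ℕ}
    (v : Fin k → V) (w : ∀ i, G.Walk (v i) (v i)) (hc : ∀ i, (w i).IsCycle)
    (hd : ∀ i j, i ≠ j → ∀ x, x ∈ (w i).support → x ∉ (w j).support) :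
    k * 3 ≤ Fintype.card V := by
  classical
  simpa using card_mul_le_card_of_pairwiseDisjoint (s := Finset.univ)
    (f := fun i => (w i).support.toFinset)
    (fun i _ j _ hij => Finset.disjoint_left.2 fun x hi hj =>
      hd i j hij x (List.mem_toFinset.1 hi) (List.mem_toFinset.1 hj))
    (fun i _ => (hc i).three_le_card_support_toFinset)

def triangleWalk {V : Type*} {a b c : V} (hab : a ≠ b) (hbc : b ≠ c) (hca : c ≠ a) :
    (⊤ : SimpleGraph V).Walk a a :=
  .cons hab (.cons hbc (.cons hca .nil))

theorem triangleWalk_isCycle {V : Type*} {a b c : V} (hab : a ≠ b) (hbc : b ≠ c) (hca : c ≠ a) :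
    (triangleWalk hab hbc hca).IsCycle := by
  simp [triangleWalk, SimpleGraph.Walk.cons_isCycle_iff, hab, hbc, hca, hab.symm, hca.symm]

theorem exists_disjoint_triangles {ι V : Type*} (g : ι × Fin 3 ↪ V) :
    ∃ (v : ι → V) (w : ∀ i, (⊤ : SimpleGraph V).Walk (v i) (v i)), (∀ i, (w i).IsCycle) ∧
      ∀ i j, i ≠ j → ∀ x, x ∈ (w i).support → x ∉ (w j).support := by
  refine ⟨fun i => g (i, 0), fun i => triangleWalk (a := g (i, 0)) (b := g (i, 1)) (c := g (i, 2))
    (by simp) (by simp) (by simp), fun i => triangleWalk_isCycle .., fun i j hij x hi hj => ?_⟩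
  simp only [triangleWalk, SimpleGraph.Walk.support_cons, SimpleGraph.Walk.support_nil,
    List.mem_cons, List.not_mem_nil, or_false] at hi hj
  rcases hi with rfl | rfl | rfl | rfl <;> rcases hj with h | h | h | h <;> simp_all

theorem IsMatching.fst_eq_of_snd_eq {α : Type*} {A : α → α → Prop} {m : Finset (α × α)}
    (hm : IsMatching A m) {σ σ' τ : α} (h : (σ, τ) ∈ m) (h' : (σ', τ) ∈ m) : σ = σ' := by
  by_contra hne
  exact (hm.2 _ h _ h' (fun he => hne (congrArg Prod.fst he))).2.2.2 rfl

section GraphArc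

variable {V : Type*} [DecidableEq V] {G : SimpleGraph V} {m : Finset (Finset V × Finset V)}
  {l : List (Finset V)} {σ τ : Finset V} {u v : V}

theorem graphArc_iff : GraphArc G σ τ ↔ ∃ u v, G.Adj u v ∧ σ = {u, v} ∧ τ = {u} := by
  refine ⟨?_, fun ⟨u, v, h, hσ, hτ⟩ => ⟨u, v, h, hσ, .inl hτ⟩⟩
  rintro ⟨u, v, h, rfl, rfl | rfl⟩
  · exact ⟨u, v, h, rfl, rfl⟩
  · exact ⟨v, u, h.symm, Finset.pair_comm u v, rfl⟩

theorem singleton_ne_pair (h : u ≠ v) (w : V) : ({w} : Finset V) ≠ {u, v} :=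
  fun he => by simpa [Finset.card_pair h] using congrArg Finset.card he

namespace MStep

theorem exists_singleton (h : MStep (GraphArc G) m σ τ) : (∃ u, σ = {u}) ∨ ∃ u, τ = {u} := by
  rcases h with ⟨h, -⟩ | ⟨h, -⟩ <;> obtain ⟨u, -, -, -, rfl⟩ := graphArc_iff.1 h
  exacts [.inr ⟨u, rfl⟩, .inl ⟨u, rfl⟩]

theorem of_singleton (h : MStep (GraphArc G) m {u} σ) :
    ∃ v, G.Adj u v ∧ σ = {u, v} ∧ (σ, {u}) ∈ m := by
  rcases h with ⟨h, -⟩ | ⟨h, hm⟩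
  · obtain ⟨a, b, hab, he, -⟩ := graphArc_iff.1 h
    exact absurd he (singleton_ne_pair (G.ne_of_adj hab) u)
  · obtain ⟨a, b, hab, rfl, he⟩ := graphArc_iff.1 h
    obtain rfl := Finset.singleton_injective he
    exact ⟨b, hab, rfl, hm⟩

theorem of_pair (huv : u ≠ v) (h : MStep (GraphArc G) m {u, v} τ) :
    ∃ w ∈ ({u, v} : Finset V), τ = {w} ∧ (({u, v} : Finset V), {w}) ∉ m := by
  rcases h with ⟨h, hm⟩ | ⟨h, -⟩
  · obtain ⟨a, b, -, he, rfl⟩ := graphArc_iff.1 h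
    exact ⟨a, he ▸ Finset.mem_insert_self a {b}, rfl, hm⟩
  · obtain ⟨a, b, -, -, he⟩ := graphArc_iff.1 h
    exact absurd he.symm (singleton_ne_pair huv a)

theorem of_singleton_of_mstep (h₁ : MStep (GraphArc G) m {u} σ) (h₂ : MStep (GraphArc G) m σ τ) :
    ∃ v, v ≠ u ∧ σ = {u, v} ∧ τ = {v} ∧ (σ, {u}) ∈ m ∧ (σ, {v}) ∉ m := by
  obtain ⟨v, huv, rfl, hm⟩ := h₁.of_singleton
  obtain ⟨w, hw, rfl, hwm⟩ := h₂.of_pair (G.ne_of_adj huv)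
  obtain rfl : w = v := by
    rcases Finset.mem_insert.1 hw with rfl | hw
    · exact absurd hm hwm
    · exact Finset.mem_singleton.1 hw
  exact ⟨w, (G.ne_of_adj huv).symm, rfl, rfl, hm, hwm⟩

/-- A singleton leaves only along its matched edge, and an edge entered from a singleton is
matched to it, so it can only leave to its other endpoint. -/
theorem functional (hm : IsMatching (GraphArc G) m) ⦃c a b b' : Finset V⦄
    (hc : MStep (GraphArc G) m c a) (hb : MStep (GraphArc G) m a b)
    (hb' : MStep (GraphArc G) m a b') : b = b' := by
  rcases hc.exists_singleton with ⟨u, rfl⟩ | ⟨u, rfl⟩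
  · obtain ⟨v, -, rfl, rfl, -⟩ := hc.of_singleton_of_mstep hb
    obtain ⟨v', hv', he, rfl, -⟩ := hc.of_singleton_of_mstep hb'
    rcases Finset.mem_insert.1 (he ▸ Finset.mem_insert_of_mem (Finset.mem_singleton_self v'))
      with h | h
    · exact absurd h hv'
    · rw [Finset.mem_singleton.1 h]
  · obtain ⟨-, -, -, hbm⟩ := hb.of_singleton
    obtain ⟨-, -, -, hbm'⟩ := hb'.of_singleton
    exact hm.fst_eq_of_snd_eq hbm hbm'

end MStep

theorem IsCycleList.exists_singleton_mem (h : IsCycleList (MStep (GraphArc G) m) l) :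
    ∃ u, {u} ∈ l := by
  obtain ⟨x, hx⟩ := List.exists_mem_of_ne_nil l (isCycleList_iff.1 h).1
  obtain ⟨y, hy, hxy⟩ := h.exists_mem_rel hx
  rcases hxy.exists_singleton with ⟨u, rfl⟩ | ⟨u, rfl⟩
  exacts [⟨u, hx⟩, ⟨u, hy⟩]

/-- An oriented cycle passes through at least three vertices: after `{a} → {a, b} → {b}` it
continues `{b} → {b, c} → {c}`, and `c = a` would make `{a, b}` matched to both endpoints. -/
theorem IsCycleList.exists_three_singletons_mem (h : IsCycleList (MStep (GraphArc G) m) l) :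
    ∃ a b c, a ≠ b ∧ a ≠ c ∧ b ≠ c ∧ {a} ∈ l ∧ {b} ∈ l ∧ {c} ∈ l := by
  obtain ⟨a, ha⟩ := h.exists_singleton_mem
  obtain ⟨σ, hσ, haσ⟩ := h.exists_mem_rel ha
  obtain ⟨τ, hτ, hστ⟩ := h.exists_mem_rel hσ
  obtain ⟨b, hba, rfl, rfl, -, hσm⟩ := haσ.of_singleton_of_mstep hστ
  obtain ⟨σ', hσ', hbσ'⟩ := h.exists_mem_rel hτ
  obtain ⟨τ', hτ', hσ'τ'⟩ := h.exists_mem_rel hσ'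
  obtain ⟨c, hcb, rfl, rfl, hσ'm, -⟩ := hbσ'.of_singleton_of_mstep hσ'τ'
  refine ⟨a, b, c, hba.symm, ?_, hcb.symm, ha, hτ, hτ'⟩
  rintro rfl
  exact hσm (Finset.pair_comm a b ▸ hσ'm)

end GraphArc

theorem cyclesOf_finite {α : Type*} [Fintype α] (A : α → α → Prop) (m : Finset (α × α)) :
    (cyclesOf A m).Finite :=
  (List.finite_length_le α (Fintype.card α)).subset fun _ hl =>
    (isCycleList_iff.1 hl).2.1.length_le_card

theorem numCycles_graphArc_mul_three_le {V : Type*} [DecidableEq V] [Fintype V]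
    {G : SimpleGraph V} {m : Finset (Finset V × Finset V)} (hm : IsMatching (GraphArc G) m) :
    numCycles (GraphArc G) m * 3 ≤ Fintype.card V := by
  classical
  have hfin := (cyclesOf_finite (GraphArc G) m).image (Quotient.mk (List.IsRotated.setoid _))
  rw [numCycles, Set.ncard_eq_toFinset_card _ hfin]
  refine card_mul_le_card_of_pairwiseDisjoint
    (f := fun c : Cycle (Finset V) => Finset.univ.filter fun u => ({u} : Finset V) ∈ c) ?_ ?_
  · rintro _ hq _ hq' hne
    obtain ⟨l, hl, rfl⟩ := hfin.mem_toFinset.1 hq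
    obtain ⟨l', hl', rfl⟩ := hfin.mem_toFinset.1 hq'
    refine Finset.disjoint_left.2 fun u hu hu' => hne (Quotient.sound ?_)
    simp only [Finset.mem_filter, Finset.mem_univ, true_and] at hu hu'
    exact hl.isRotated_of_mem (MStep.functional hm) hl' hu hu'
  · rintro _ hq
    obtain ⟨l, hl, rfl⟩ := hfin.mem_toFinset.1 hq
    obtain ⟨a, b, c, hab, hac, hbc, ha, hb, hc⟩ := hl.exists_three_singletons_mem
    rw [← Finset.card_eq_three.2 ⟨a, b, c, hab, hac, hbc, rfl⟩]
    refine Finset.card_le_card fun x hx => ?_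
    simp only [Finset.mem_insert, Finset.mem_singleton] at hx
    rcases hx with rfl | rfl | rfl <;> simpa

section Triangles

variable {ι V : Type*} [DecidableEq V] (g : ι × Fin 3 ↪ V)

def triangleEdge (i : ι) (r : Fin 3) : Finset V := {g (i, r), g (i, r + 1)}

def triangleMatching [Fintype ι] : Finset (Finset V × Finset V) :=
  Finset.univ.image fun p : ι × Fin 3 => (triangleEdge g p.1 p.2, {g p})

def triangleCycle (i : ι) : List (Finset V) :=
  [{g (i, 0)}, triangleEdge g i 0, {g (i, 1)}, triangleEdge g i 1, {g (i, 2)}, triangleEdge g i 2]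

variable {g}

theorem triangleEdge_inj {i j : ι} {r s : Fin 3} :
    triangleEdge g i r = triangleEdge g j s ↔ i = j ∧ r = s := by
  refine ⟨fun h => ?_, by rintro ⟨rfl, rfl⟩; rfl⟩
  have h₁ : g (i, r) ∈ triangleEdge g j s := h ▸ Finset.mem_insert_self _ _
  have h₂ : g (i, r + 1) ∈ triangleEdge g j s :=
    h ▸ Finset.mem_insert_of_mem (Finset.mem_singleton_self _)
  simp only [triangleEdge, Finset.mem_insert, Finset.mem_singleton, g.apply_eq_iff_eq,
    Prod.mk.injEq] at h₁ h₂
  have : ∀ r s : Fin 3, r = s ∨ r = s + 1 → r + 1 = s ∨ r + 1 = s + 1 → r = s := by decide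
  exact ⟨by tauto, this r s (by tauto) (by tauto)⟩

theorem singleton_ne_triangleEdge (x : V) (i : ι) (r : Fin 3) : {x} ≠ triangleEdge g i r :=
  singleton_ne_pair (by simp) x

theorem mem_triangleMatching [Fintype ι] {p : Finset V × Finset V} :
    p ∈ triangleMatching g ↔ ∃ i r, (triangleEdge g i r, {g (i, r)}) = p := by
  simp [triangleMatching]

theorem pair_singleton_mem_triangleMatching_iff [Fintype ι] {σ : Finset V} {i : ι} {r : Fin 3} :
    (σ, {g (i, r)}) ∈ triangleMatching g ↔ σ = triangleEdge g i r := by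
  simp [mem_triangleMatching, eq_comm]

theorem graphArc_triangleEdge (i : ι) (r : Fin 3) :
    GraphArc ⊤ (triangleEdge g i r) {g (i, r)} ∧
      GraphArc ⊤ (triangleEdge g i r) {g (i, r + 1)} :=
  ⟨⟨_, _, by simp, rfl, .inl rfl⟩, ⟨_, _, by simp, rfl, .inr rfl⟩⟩

theorem isMatching_triangleMatching [Fintype ι] :
    IsMatching (GraphArc ⊤) (triangleMatching g) := by
  refine ⟨fun p hp => ?_, fun p hp q hq hpq => ?_⟩
  · obtain ⟨i, r, rfl⟩ := mem_triangleMatching.1 hp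
    exact (graphArc_triangleEdge i r).1
  · obtain ⟨i, r, rfl⟩ := mem_triangleMatching.1 hp
    obtain ⟨j, s, rfl⟩ := mem_triangleMatching.1 hq
    have hne : ¬(i = j ∧ r = s) := by rintro ⟨rfl, rfl⟩; exact hpq rfl
    exact ⟨fun h => hne (triangleEdge_inj.1 h), (singleton_ne_triangleEdge _ i r).symm,
      singleton_ne_triangleEdge _ j s, by simpa using hne⟩

theorem mstep_singleton_triangleEdge [Fintype ι] (i : ι) (r : Fin 3) :
    MStep (GraphArc ⊤) (triangleMatching g) {g (i, r)} (triangleEdge g i r) :=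
  .inr ⟨(graphArc_triangleEdge i r).1, pair_singleton_mem_triangleMatching_iff.2 rfl⟩

theorem mstep_triangleEdge_singleton [Fintype ι] (i : ι) (r : Fin 3) :
    MStep (GraphArc ⊤) (triangleMatching g) (triangleEdge g i r) {g (i, r + 1)} := by
  refine .inl ⟨(graphArc_triangleEdge i r).2, fun h => ?_⟩
  simpa using (triangleEdge_inj.1 (pair_singleton_mem_triangleMatching_iff.1 h)).2

theorem isCycleList_triangleCycle [Fintype ι] (i : ι) :
    IsCycleList (MStep (GraphArc ⊤) (triangleMatching g)) (triangleCycle g i) := by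
  refine ⟨?_, ?_⟩
  · simp [triangleEdge_inj, singleton_ne_triangleEdge, (singleton_ne_triangleEdge _ _ _).symm]
  · exact .cons_cons (mstep_singleton_triangleEdge i 0) <|
      .cons_cons (mstep_triangleEdge_singleton i 0) <|
      .cons_cons (mstep_singleton_triangleEdge i 1) <|
      .cons_cons (mstep_triangleEdge_singleton i 1) <|
      .cons_cons (mstep_singleton_triangleEdge i 2) <|
      .cons_cons (mstep_triangleEdge_singleton i 2) <|
      .singleton _

theorem card_le_numCycles_triangleMatching [Fintype ι] [Fintype V] :
    Fintype.card ι ≤ numCycles (GraphArc ⊤) (triangleMatching g) := by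
  rw [← Nat.card_eq_fintype_card, ← Set.ncard_univ, numCycles]
  refine Set.ncard_le_ncard_of_injOn (fun i => Quotient.mk _ (triangleCycle g i))
    (fun i _ => ⟨_, isCycleList_triangleCycle i, rfl⟩) (fun i _ j _ hij => ?_)
    ((cyclesOf_finite _ _).image _)
  have hmem : {g (i, 0)} ∈ triangleCycle g j :=
    (Quotient.exact hij).perm.mem_iff.1 List.mem_cons_self
  simpa [triangleCycle, singleton_ne_triangleEdge] using hmem

end Triangles

def finTriples (n : ℕ) : Fin (n / 3) × Fin 3 ↪ Fin n :=
  finProdFinEquiv.toEmbedding.trans (Fin.castLEEmb (Nat.div_mul_le_self n 3))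

/-- the maximum number of pairwise vertex-disjoint cycles in the complete
graph `K_n` equals `⌊n/3⌋`; equivalently `η(K_n) = ⌊n/3⌋`. -/
theorem eta_complete_graph (n : ℕ) :
    sSup {k : ℕ | ∃ (v : Fin k → Fin n)
        (w : ∀ i, (⊤ : SimpleGraph (Fin n)).Walk (v i) (v i)),
        (∀ i, (w i).IsCycle) ∧
        ∀ i j, i ≠ j → ∀ x : Fin n, x ∈ (w i).support → x ∉ (w j).support} = n / 3 ∧
    sSup {k : ℕ | ∃ m : Finset (Finset (Fin n) × Finset (Fin n)),
        IsMatching (GraphArc (⊤ : SimpleGraph (Fin n))) m ∧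
        numCycles (GraphArc (⊤ : SimpleGraph (Fin n))) m = k} = n / 3 := by
  have hle : ∀ k, k * 3 ≤ Fintype.card (Fin n) → k ≤ n / 3 := fun k hk =>
    (Nat.le_div_iff_mul_le three_pos).2 (by simpa using hk)
  have hM := isMatching_triangleMatching (g := finTriples n)
  have hJ : numCycles (GraphArc ⊤) (triangleMatching (finTriples n)) = n / 3 :=
    le_antisymm (hle _ (numCycles_graphArc_mul_three_le hM))
      (by simpa using card_le_numCycles_triangleMatching (g := finTriples n))
  refine ⟨IsGreatest.csSup_eq ⟨exists_disjoint_triangles (finTriples n), ?_⟩,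
    IsGreatest.csSup_eq ⟨⟨_, hM, hJ⟩, ?_⟩⟩
  · rintro k ⟨v, w, hc, hd⟩
    exact hle k (card_mul_three_le_of_disjoint_cycles v w hc hd)
  · rintro k ⟨m, hm, rfl⟩
    exact hle _ (numCycles_graphArc_mul_three_le hm)
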